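/- arXiv:1612.07960 — 2 statements merged into one kernel-verified Lean document; each statement's English description precedes it below -/
import Mathlib

section
/- Let G be a finite abelian group with subgroups G₁, G₂ ≤ G, and let F: G₁ × G₂ → ℂˣ be a perfect pairing. Define Sym(F)((μ₁,μ₂),(ν₁,ν₂)) = F(μ₁,ν₂)·F(ν₁,μ₂), let (G₁×G₂)₀ := {(ν₁,ν₂) ∈ G₁ × G₂ : ν₁ + ν₂ = 0 in G}, and let Rad := {x ∈ G₁ × G₂ : Sym(F)(x,y) = 1 for all y ∈ (G₁×G₂)₀}. Then Rad is isomorphic, as an abelian group, to the subgroup G₁ + G₂ of G. -/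
/-!
Put `A = G₁ × G₂` and `K = ker (A → G, (μ₁, μ₂) ↦ μ₁ + μ₂)`, so that `A ⧸ K ≃ G₁ + G₂`.
Perfectness of `F` makes `Sym(F) : A → Â` injective, hence bijective since `|Â| = |A|`,
and `Rad` is the preimage of the annihilator `K^⊥ ≃ (A ⧸ K)^ ≃ A ⧸ K`.
-/

open AddSubgroup Function

theorem AddCommGroup.nonempty_addMonoidHom_additive_complexUnits_addEquiv
    (A : Type*) [AddCommGroup A] [Finite A] : Nonempty ((A →+ Additive ℂˣ) ≃+ A) := by
  have : NeZero (Monoid.exponent (Multiplicative A) : ℂ) :=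
    ⟨Nat.cast_ne_zero.mpr Monoid.exponent_ne_zero_of_finite⟩
  obtain ⟨e⟩ := CommGroup.monoidHom_mulEquiv_of_hasEnoughRootsOfUnity (Multiplicative A) ℂ
  exact ⟨AddMonoidHom.toMultiplicativeLeftAddEquiv.trans
    ((MulEquiv.toAdditive e).trans AddEquiv.toAdditive_toMultiplicative)⟩

section Duality

variable {A : Type*} [AddCommGroup A] [Finite A]

theorem AddCommGroup.bijective_of_injective_addMonoidHom_dual
    {S : A →+ (A →+ Additive ℂˣ)} (hS : Injective S) : Bijective S := by
  obtain ⟨e⟩ := AddCommGroup.nonempty_addMonoidHom_additive_complexUnits_addEquiv A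
  have : Finite (A →+ Additive ℂˣ) := .of_equiv A e.symm.toEquiv
  exact (Nat.bijective_iff_injective_and_card S).mpr ⟨hS, Nat.card_congr e.symm.toEquiv⟩

theorem AddCommGroup.nonempty_comap_ker_domRestrictHom_addEquiv_quotient
    {S : A →+ (A →+ Additive ℂˣ)} (hS : Injective S) (K : AddSubgroup A) :
    Nonempty ((AddMonoidHom.domRestrictHom K (Additive ℂˣ)).ker.comap S ≃+ A ⧸ K) := by
  obtain ⟨d⟩ := AddCommGroup.nonempty_addMonoidHom_additive_complexUnits_addEquiv (A ⧸ K)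
  have hSbij := AddCommGroup.bijective_of_injective_addMonoidHom_dual hS
  let H : AddSubgroup (A →+ Additive ℂˣ) :=
    (AddMonoidHom.domRestrictHom K (Additive ℂˣ)).ker
  have hbij : Bijective (S.addSubgroupComap H) :=
    ⟨fun x y h => Subtype.ext (hS (congrArg Subtype.val h)),
      S.addSubgroupComap_surjective_of_surjective H hSbij.2⟩
  exact ⟨(AddEquiv.ofBijective _ hbij).trans <|
    (AddMonoidHom.domRestrictHomKerEquiv _ K).trans d⟩

end Duality

section Symmetrize

variable {M N C : Type*} [AddCommGroup M] [AddCommGroup N] [AddCommGroup C]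

def AddMonoidHom.symmetrize (B : M →+ N →+ C) : M × N →+ M × N →+ C :=
  (B.compl₂ (.snd M N)).comp (.fst M N) + (B.flip.compl₂ (.fst M N)).comp (.snd M N)

@[simp]
theorem AddMonoidHom.symmetrize_apply (B : M →+ N →+ C) (p q : M × N) :
    B.symmetrize p q = B p.1 q.2 + B q.1 p.2 := rfl

theorem AddMonoidHom.symmetrize_injective {B : M →+ N →+ C} (hl : Injective B)
    (hr : Injective B.flip) : Injective B.symmetrize := by
  refine (injective_iff_map_eq_zero _).mpr fun p hp => ?_
  have h (q : M × N) : B p.1 q.2 + B q.1 p.2 = 0 :=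
    (B.symmetrize_apply p q).symm.trans (DFunLike.congr_fun hp q)
  refine Prod.ext (hl ?_) (hr ?_) <;> ext x
  · simpa using h (0, x)
  · simpa using h (x, 0)

end Symmetrize

section Pairing

variable {G : Type*} [AddCommGroup G] (G₁ G₂ : AddSubgroup G) (F : G → G → ℂˣ)
  (hF1 : ∀ μ μ' ν : G, μ ∈ G₁ → μ' ∈ G₁ → ν ∈ G₂ →
    F (μ + μ') ν = F μ ν * F μ' ν)
  (hF2 : ∀ μ ν ν' : G, μ ∈ G₁ → ν ∈ G₂ → ν' ∈ G₂ →
    F μ (ν + ν') = F μ ν * F μ ν')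

def AddSubgroup.pairingOfMul : G₁ →+ G₂ →+ Additive ℂˣ :=
  AddMonoidHom.mk' (fun μ => AddMonoidHom.mk' (fun ν => .ofMul (F μ ν))
    fun ν ν' => congrArg Additive.ofMul (hF2 μ ν ν' μ.2 ν.2 ν'.2))
    fun μ μ' => AddMonoidHom.ext fun ν => congrArg Additive.ofMul (hF1 μ μ' ν μ.2 μ'.2 ν.2)

variable {G₁ G₂ F}

theorem AddSubgroup.injective_pairingOfMul
    (hperfL : ∀ μ ∈ G₁, (∀ ν ∈ G₂, F μ ν = 1) → μ = 0) :
    Injective (G₁.pairingOfMul G₂ F hF1 hF2) :=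
  (injective_iff_map_eq_zero _).mpr fun μ hμ => Subtype.ext <|
    hperfL μ μ.2 fun ν hν => congrArg Additive.toMul (DFunLike.congr_fun hμ ⟨ν, hν⟩)

theorem AddSubgroup.injective_flip_pairingOfMul
    (hperfR : ∀ ν ∈ G₂, (∀ μ ∈ G₁, F μ ν = 1) → ν = 0) :
    Injective (G₁.pairingOfMul G₂ F hF1 hF2).flip :=
  (injective_iff_map_eq_zero _).mpr fun ν hν => Subtype.ext <|
    hperfR ν ν.2 fun μ hμ => congrArg Additive.toMul (DFunLike.congr_fun hν ⟨μ, hμ⟩)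

end Pairing

theorem AddSubgroup.range_coprod_subtype {G : Type*} [AddCommGroup G] (G₁ G₂ : AddSubgroup G) :
    (G₁.subtype.coprod G₂.subtype).range = G₁ ⊔ G₂ := by
  ext x
  simp [mem_sup]

/-- the radical `Rad` of the symmetrization `Sym(F)` of a perfect
pairing `F : G₁ × G₂ → ℂˣ` against the fiber over `0` is a subgroup of
`G₁ × G₂` isomorphic, as an abelian group, to `G₁ + G₂ ≤ G`. -/
theorem stmt16 {G : Type*} [AddCommGroup G] [Finite G]
    (G₁ G₂ : AddSubgroup G)
    (F : G → G → ℂˣ)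
    (hF1 : ∀ μ μ' ν : G, μ ∈ G₁ → μ' ∈ G₁ → ν ∈ G₂ →
      F (μ + μ') ν = F μ ν * F μ' ν)
    (hF2 : ∀ μ ν ν' : G, μ ∈ G₁ → ν ∈ G₂ → ν' ∈ G₂ →
      F μ (ν + ν') = F μ ν * F μ ν')
    (hperfL : ∀ μ ∈ G₁, (∀ ν ∈ G₂, F μ ν = 1) → μ = 0)
    (hperfR : ∀ ν ∈ G₂, (∀ μ ∈ G₁, F μ ν = 1) → ν = 0) :
    ∃ R : AddSubgroup (G × G),
      (R : Set (G × G)) =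
        {p | p.1 ∈ G₁ ∧ p.2 ∈ G₂ ∧
          ∀ q : G × G, q.1 ∈ G₁ → q.2 ∈ G₂ → q.1 + q.2 = 0 →
            F p.1 q.2 * F q.1 p.2 = 1} ∧
      Nonempty (R ≃+ ↥(G₁ ⊔ G₂)) := by
  have hS := AddMonoidHom.symmetrize_injective
    (injective_pairingOfMul hF1 hF2 hperfL) (injective_flip_pairingOfMul hF1 hF2 hperfR)
  let σ := G₁.subtype.coprod G₂.subtype
  obtain ⟨e⟩ := AddCommGroup.nonempty_comap_ker_domRestrictHom_addEquiv_quotient hS σ.ker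
  let ι := G₁.subtype.prodMap G₂.subtype
  have hι : Injective ι :=
    Prod.map_injective.mpr ⟨G₁.subtype_injective, G₂.subtype_injective⟩
  refine ⟨_, ?_, ⟨(equivMapOfInjective _ ι hι).symm.trans <| e.trans <|
    (QuotientAddGroup.quotientKerEquivRange σ).trans <|
      .addSubgroupCongr (range_coprod_subtype G₁ G₂)⟩⟩
  ext ⟨x, y⟩
  simp only [coe_map, Set.mem_image, SetLike.mem_coe, mem_comap, AddMonoidHom.mem_ker,
    AddMonoidHom.domRestrictHom_apply, AddMonoidHom.domRestrict_eq_zero_iff, Set.mem_ofPred_eq]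
  -- `symmetrize (pairingOfMul …) a q = 0` unfolds to `F a.1 q.2 * F q.1 a.2 = 1`.
  constructor
  · rintro ⟨⟨μ, ν⟩, hμν, hxy⟩
    obtain ⟨rfl, rfl⟩ := Prod.mk.inj hxy
    exact ⟨μ.2, ν.2, fun q h₁ h₂ h₀ => hμν (⟨q.1, h₁⟩, ⟨q.2, h₂⟩) h₀⟩
  · rintro ⟨hx, hy, h⟩
    exact ⟨(⟨x, hx⟩, ⟨y, hy⟩), fun q hq => h (q.1, q.2) q.1.2 q.2.2 hq, rfl⟩
end

section
/- Let n ≥ 1, let P be an n × n integer matrix with det P = ±1, let S = diag(d₁,…,dₙ) with positive integers dᵢ, set A := P·S·Pᵀ, and let ℓ ≥ 1 be an integer. Then 2ℓ·A·ℤⁿ ⊆ 2·ℤⁿ ∩ ℓ·A·ℤⁿ, and the quotient group (2·ℤⁿ ∩ ℓ·A·ℤⁿ)/(2ℓ·A·ℤⁿ) is isomorphic to the direct product ∏ᵢ₌₁ⁿ ℤ/gcd(2, ℓ·dᵢ)ℤ. In particular this quotient is trivial if and only if ℓ·dᵢ is odd for all i. -/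
/-!
Since `P` is unimodular, `c • (P * S * Pᵀ)` has the same image as `P * (c • S)`, and
`2 • 1 = P * (2 • 1) * P⁻¹` has the same image as `P * (2 • 1)`. So in the coordinates `P⁻¹ x`
every lattice of the statement is a box lattice `∏ᵢ mᵢℤ`: the intersection becomes
`∏ᵢ lcm(2, ℓdᵢ)ℤ` and `2ℓ·A·ℤⁿ` becomes `∏ᵢ gcd(2, ℓdᵢ)·lcm(2, ℓdᵢ)ℤ`. Dividing by the lcm
identifies the quotient with `∏ᵢ ℤ/gcd(2, ℓdᵢ)ℤ`, which is trivial iff every gcd is `1`.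
-/

def imageLatZ {n : ℕ} (M : Matrix (Fin n) (Fin n) ℤ) :
    AddSubgroup (Fin n → ℤ) :=
  AddMonoidHom.range (Matrix.mulVecLin M).toAddMonoidHom

open Matrix

section BoxLattice

variable {ι : Type*}

def boxLattice (m : ι → ℕ) : AddSubgroup (ι → ℤ) :=
  AddSubgroup.pi Set.univ fun i => AddSubgroup.zmultiples (m i : ℤ)

theorem mem_boxLattice {m : ι → ℕ} {x : ι → ℤ} : x ∈ boxLattice m ↔ ∀ i, (m i : ℤ) ∣ x i := by
  simp [boxLattice, AddSubgroup.mem_pi, Int.mem_zmultiples_iff]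

theorem boxLattice_le_boxLattice_iff {m m' : ι → ℕ} :
    boxLattice m ≤ boxLattice m' ↔ ∀ i, m' i ∣ m i := by
  refine ⟨fun h i => ?_, fun h x hx => mem_boxLattice.2 fun i => ?_⟩
  · exact Int.natCast_dvd_natCast.1 (mem_boxLattice.1 (h (mem_boxLattice.2 fun _ => dvd_rfl)) i)
  · exact (Int.natCast_dvd_natCast.2 (h i)).trans (mem_boxLattice.1 hx i)

theorem boxLattice_injective : Function.Injective (boxLattice (ι := ι)) := fun _ _ h =>
  funext fun i => Nat.dvd_antisymm (boxLattice_le_boxLattice_iff.1 h.ge i)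
    (boxLattice_le_boxLattice_iff.1 h.le i)

theorem boxLattice_inf_boxLattice (m m' : ι → ℕ) :
    boxLattice m ⊓ boxLattice m' = boxLattice fun i => Nat.lcm (m i) (m' i) := by
  ext x
  simp only [AddSubgroup.mem_inf, mem_boxLattice, Int.natCast_dvd, Nat.lcm_dvd_iff, forall_and]

def boxLatticeEquiv (L : ι → ℕ) (hL : ∀ i, L i ≠ 0) : (ι → ℤ) ≃+ boxLattice L where
  toFun y := ⟨fun i => L i * y i, mem_boxLattice.2 fun i => dvd_mul_right _ _⟩
  invFun x i := x.1 i / L i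
  left_inv y := funext fun i => Int.mul_ediv_cancel_left _ (by exact_mod_cast hL i)
  right_inv x := Subtype.ext <| funext fun i => Int.mul_ediv_cancel' (mem_boxLattice.1 x.2 i)
  map_add' y z := Subtype.ext <| funext fun i => mul_add _ _ _

theorem nonempty_quotient_boxLattice_mul (g L : ι → ℕ) (hL : ∀ i, L i ≠ 0) :
    Nonempty (boxLattice L ⧸ (boxLattice (g * L)).addSubgroupOf (boxLattice L)
      ≃+ ∀ i, ZMod (g i)) := by
  let e := boxLatticeEquiv L hL
  let ψ := (AddMonoidHom.piMap fun i => Int.castAddHom (ZMod (g i))).comp e.symm.toAddMonoidHom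
  have hψ : Function.Surjective ψ :=
    (Function.Surjective.piMap fun i => ZMod.intCast_surjective).comp e.symm.surjective
  have hker : ψ.ker = (boxLattice (g * L)).addSubgroupOf (boxLattice L) := by
    ext x
    obtain ⟨y, rfl⟩ := e.surjective x
    simp only [AddMonoidHom.mem_ker, AddSubgroup.mem_addSubgroupOf, mem_boxLattice, funext_iff]
    simp [ψ, e, boxLatticeEquiv, ZMod.intCast_zmod_eq_zero_iff_dvd, mul_comm (g _ : ℤ),
      mul_dvd_mul_iff_left, hL]
  exact ⟨hker ▸ QuotientAddGroup.quotientKerEquivOfSurjective ψ hψ⟩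

end BoxLattice

theorem nonempty_quotient_addSubgroupOf_map {G N : Type*} [AddCommGroup G] [AddCommGroup N]
    {f : G →+ N} (hf : Function.Injective f) (H K : AddSubgroup G) :
    Nonempty (K.map f ⧸ (H.map f).addSubgroupOf (K.map f) ≃+ K ⧸ H.addSubgroupOf K) := by
  refine ⟨(QuotientAddGroup.congr _ _ (K.equivMapOfInjective f hf) ?_).symm⟩
  ext ⟨y, hy⟩
  simp only [AddSubgroup.mem_addSubgroupOf, AddSubgroup.mem_map]
  constructor
  · rintro ⟨⟨x, _⟩, hx, h⟩
    exact ⟨x, hx, congrArg Subtype.val h⟩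
  · rintro ⟨x, hx, rfl⟩
    obtain ⟨k, hk, hkx⟩ := hy
    exact ⟨⟨x, hf hkx ▸ hk⟩, hx, rfl⟩

section ImageLattice

variable {n : ℕ}

theorem mem_imageLatZ {M : Matrix (Fin n) (Fin n) ℤ} {x : Fin n → ℤ} :
    x ∈ imageLatZ M ↔ ∃ y, M *ᵥ y = x := by
  simp [imageLatZ]

theorem imageLatZ_mul (P M : Matrix (Fin n) (Fin n) ℤ) :
    imageLatZ (P * M) = (imageLatZ M).map (mulVecLin P).toAddMonoidHom := by
  rw [imageLatZ, imageLatZ, ← AddMonoidHom.range_comp, mulVecLin_mul]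
  rfl

theorem imageLatZ_mul_of_isUnit_det (M Q : Matrix (Fin n) (Fin n) ℤ) (hQ : IsUnit Q.det) :
    imageLatZ (M * Q) = imageLatZ M := by
  ext x
  simp only [mem_imageLatZ, ← mulVec_mulVec]
  have hQ' : Function.Surjective Q.mulVec :=
    mulVec_surjective_iff_isUnit.2 ((isUnit_iff_isUnit_det Q).2 hQ)
  exact (hQ'.exists (p := fun y => M *ᵥ y = x)).symm

theorem imageLatZ_diagonal (m : Fin n → ℕ) :
    imageLatZ (diagonal fun i => (m i : ℤ)) = boxLattice m := by
  ext x
  simp only [mem_imageLatZ, mem_boxLattice, mulVec_diagonal, funext_iff]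
  refine ⟨fun ⟨y, hy⟩ i => ⟨y i, (hy i).symm⟩, fun h => ?_⟩
  choose y hy using h
  exact ⟨y, fun i => (hy i).symm⟩

theorem imageLatZ_natCast_smul_conj_diagonal (P : Matrix (Fin n) (Fin n) ℤ) (hP : IsUnit P.det)
    (c : ℕ) (d : Fin n → ℕ) :
    imageLatZ ((c : ℤ) • (P * diagonal (fun i => (d i : ℤ)) * Pᵀ))
      = (boxLattice fun i => c * d i).map (mulVecLin P).toAddMonoidHom := by
  rw [← smul_mul, ← Matrix.mul_smul, imageLatZ_mul_of_isUnit_det _ _ (by rwa [det_transpose]),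
    imageLatZ_mul, ← diagonal_smul, ← imageLatZ_diagonal]
  push_cast
  rfl

theorem imageLatZ_natCast_smul_one (P : Matrix (Fin n) (Fin n) ℤ) (hP : IsUnit P.det) (c : ℕ) :
    imageLatZ ((c : ℤ) • (1 : Matrix (Fin n) (Fin n) ℤ))
      = (boxLattice fun _ => c).map (mulVecLin P).toAddMonoidHom := by
  have hconj : (c : ℤ) • (1 : Matrix (Fin n) (Fin n) ℤ) = P * ((c : ℤ) • 1) * P⁻¹ := by
    rw [Matrix.mul_smul, mul_one, smul_mul, mul_nonsing_inv P hP]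
  rw [hconj, imageLatZ_mul_of_isUnit_det _ _ (isUnit_nonsing_inv_det P hP), imageLatZ_mul,
    smul_one_eq_diagonal, ← imageLatZ_diagonal]

end ImageLattice

open Matrix in
theorem stmt18_general {n : ℕ}
    (P : Matrix (Fin n) (Fin n) ℤ) (hP : P.det = 1 ∨ P.det = -1)
    (d : Fin n → ℕ) (hd : ∀ i, 0 < d i)
    (ℓ : ℕ) (hℓ : 1 ≤ ℓ)
    (A : Matrix (Fin n) (Fin n) ℤ)
    (hA : A = P * Matrix.diagonal (fun i => (d i : ℤ)) * P.transpose) :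
    imageLatZ (((2 * ℓ : ℕ) : ℤ) • A)
        ≤ imageLatZ ((2 : ℤ) • (1 : Matrix (Fin n) (Fin n) ℤ))
            ⊓ imageLatZ ((ℓ : ℤ) • A) ∧
    Nonempty
      ((↥(imageLatZ ((2 : ℤ) • (1 : Matrix (Fin n) (Fin n) ℤ))
            ⊓ imageLatZ ((ℓ : ℤ) • A)) ⧸
          (imageLatZ (((2 * ℓ : ℕ) : ℤ) • A)).addSubgroupOf
            (imageLatZ ((2 : ℤ) • (1 : Matrix (Fin n) (Fin n) ℤ))
              ⊓ imageLatZ ((ℓ : ℤ) • A)))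
        ≃+ (∀ i : Fin n, ZMod (Nat.gcd 2 (ℓ * d i)))) ∧
    ((imageLatZ (((2 * ℓ : ℕ) : ℤ) • A)
        = imageLatZ ((2 : ℤ) • (1 : Matrix (Fin n) (Fin n) ℤ))
            ⊓ imageLatZ ((ℓ : ℤ) • A)) ↔ ∀ i, Odd (ℓ * d i)) := by
  subst hA
  have hPu : IsUnit P.det := Int.isUnit_iff.mpr hP
  have hf : Function.Injective (mulVecLin P).toAddMonoidHom :=
    mulVec_injective_of_det_ne_zero hPu.ne_zero
  set g : Fin n → ℕ := fun i => Nat.gcd 2 (ℓ * d i)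
  set L : Fin n → ℕ := fun i => Nat.lcm 2 (ℓ * d i)
  have hL : ∀ i, L i ≠ 0 := fun i => Nat.lcm_ne_zero two_ne_zero (Nat.mul_pos hℓ (hd i)).ne'
  have hgL : (fun i => 2 * ℓ * d i) = g * L :=
    funext fun i => by simp only [Pi.mul_apply, g, L, Nat.gcd_mul_lcm, mul_assoc]
  have h2 := imageLatZ_natCast_smul_one P hPu 2
  rw [Nat.cast_ofNat] at h2
  rw [h2, imageLatZ_natCast_smul_conj_diagonal P hPu, imageLatZ_natCast_smul_conj_diagonal P hPu,
    ← AddSubgroup.map_inf _ _ _ hf, boxLattice_inf_boxLattice, hgL]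
  refine ⟨AddSubgroup.map_mono (boxLattice_le_boxLattice_iff.2 fun i => dvd_mul_left _ _), ?_, ?_⟩
  · obtain ⟨e⟩ := nonempty_quotient_boxLattice_mul g L hL
    obtain ⟨e'⟩ := nonempty_quotient_addSubgroupOf_map hf (boxLattice (g * L)) (boxLattice L)
    exact ⟨e'.trans e⟩
  · rw [(AddSubgroup.map_injective hf).eq_iff, boxLattice_injective.eq_iff, funext_iff]
    exact forall_congr' fun i => (mul_eq_right₀ (hL i)).trans Nat.coprime_two_left

/-- for `A = P S Pᵀ` with `P` unimodular and `S = diag(d₁,…,dₙ)`,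
`dᵢ > 0`, one has `2ℓ·A·ℤⁿ ⊆ 2·ℤⁿ ∩ ℓ·A·ℤⁿ`, the quotient is isomorphic to
`∏ᵢ ℤ/gcd(2,ℓ·dᵢ)ℤ`, and in particular it is trivial iff all `ℓ·dᵢ` are odd. -/
theorem stmt18 {n : ℕ} (hn : 1 ≤ n)
    (P : Matrix (Fin n) (Fin n) ℤ) (hP : P.det = 1 ∨ P.det = -1)
    (d : Fin n → ℕ) (hd : ∀ i, 0 < d i)
    (ℓ : ℕ) (hℓ : 1 ≤ ℓ)
    (A : Matrix (Fin n) (Fin n) ℤ)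
    (hA : A = P * Matrix.diagonal (fun i => (d i : ℤ)) * P.transpose) :
    imageLatZ (((2 * ℓ : ℕ) : ℤ) • A)
        ≤ imageLatZ ((2 : ℤ) • (1 : Matrix (Fin n) (Fin n) ℤ))
            ⊓ imageLatZ ((ℓ : ℤ) • A) ∧
    Nonempty
      ((↥(imageLatZ ((2 : ℤ) • (1 : Matrix (Fin n) (Fin n) ℤ))
            ⊓ imageLatZ ((ℓ : ℤ) • A)) ⧸
          (imageLatZ (((2 * ℓ : ℕ) : ℤ) • A)).addSubgroupOf
            (imageLatZ ((2 : ℤ) • (1 : Matrix (Fin n) (Fin n) ℤ))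
              ⊓ imageLatZ ((ℓ : ℤ) • A)))
        ≃+ (∀ i : Fin n, ZMod (Nat.gcd 2 (ℓ * d i)))) ∧
    ((imageLatZ (((2 * ℓ : ℕ) : ℤ) • A)
        = imageLatZ ((2 : ℤ) • (1 : Matrix (Fin n) (Fin n) ℤ))
            ⊓ imageLatZ ((ℓ : ℤ) • A)) ↔ ∀ i, Odd (ℓ * d i)) :=
  stmt18_general P hP d hd ℓ hℓ A hA
end
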